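/- Let U be proper, lsc, and σ-strongly convex with σ > 0, and let γ > 0. Then the Moreau envelope U_γ is (σ/(1+γσ))-strongly convex. Conversely, if U_γ is (σ/(1+γσ))-strongly convex, then U is σ-strongly convex. -/

import Mathlib

/-!
Forward direction: to bound `U_γ (a • x₁ + b • x₂)`, test the infimum at `a • y₁ + b • y₂` for
arbitrary `y₁, y₂`. Convex-combining the quadratic penalties loses
`a b ‖(x₁ - y₁) - (x₂ - y₂)‖² / (2γ)`, and together with the strong convexity defect
`a b σ ‖y₁ - y₂‖² / 2` this dominates `a b σ / (1 + γσ) ‖x₁ - x₂‖² / 2`, because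
`σ / (1 + γσ) ‖e + f‖² ≤ ‖e‖² / γ + σ ‖f‖²`.

Converse: a convex lsc `U` has, by Hahn–Banach in `E × ℝ`, an affine minorant through any
point strictly below the graph, so `U z = sup_x (U_γ x - ‖x - z‖² / (2γ))`. Given `y₁, y₂` and `x`,
apply the strong convexity of `U_γ` to the points `x₁, x₂` with `a • x₁ + b • x₂ = x` and
`x₁ - x₂ = (1 + γσ) (y₁ - y₂)`, and bound `U_γ xᵢ` by testing at `yᵢ`; this gives
`U_γ x - ‖x - z‖² / (2γ) ≤ a U y₁ + b U y₂ - a b σ ‖y₁ - y₂‖² / 2` for `z = a • y₁ + b • y₂`.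
-/

namespace EReal

theorem add_coe_le_coe_iff {x : EReal} {c r : ℝ} : x + c ≤ r ↔ x ≤ ((r - c : ℝ) : EReal) := by
  rw [coe_sub, le_sub_iff_add_le (.inl (coe_ne_bot c)) (.inl (coe_ne_top c))]

theorem coe_mul_add_coe_mul_le {A B : EReal} {a b r s : ℝ} (ha : 0 ≤ a) (hb : 0 ≤ b) (hA : A ≤ r)
    (hB : B ≤ s) : a * A + b * B ≤ ((a * r + b * s : ℝ) : EReal) := by
  rw [coe_add, coe_mul, coe_mul]
  exact add_le_add (mul_le_mul_of_nonneg_left hA (EReal.coe_nonneg.2 ha))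
    (mul_le_mul_of_nonneg_left hB (EReal.coe_nonneg.2 hb))

/-- The side conditions exclude `a * A + b * B = ⊤ + ⊥`, which is `⊥` in `EReal`. -/
theorem le_coe_mul_add_coe_mul_of_forall_lt {L A B : EReal} {a b : ℝ} (ha : 0 < a) (hb : 0 < b)
    (hAB : A ≠ ⊤ ∨ B ≠ ⊥) (hBA : B ≠ ⊤ ∨ A ≠ ⊥)
    (h : ∀ r s : ℝ, A < r → B < s → L ≤ ((a * r + b * s : ℝ) : EReal)) :
    L ≤ a * A + b * B := by
  have eq_bot {p c : ℝ} (hp : 0 < p) (hL : ∀ r : ℝ, L ≤ ((p * r + c : ℝ) : EReal)) : L = ⊥ :=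
    (eq_bot_iff_forall_lt L).2 fun z => (hL ((z - 1 - c) / p)).trans_lt <| by
      rw [EReal.coe_lt_coe_iff, mul_div_cancel₀ _ hp.ne']; linarith
  induction A with
  | top =>
    have hbB : (b : EReal) * B ≠ ⊥ := (mul_ne_bot _ _).2
      ⟨.inl (coe_ne_bot b), .inr (by simpa using hAB), .inl (coe_ne_top b),
        .inl (EReal.coe_nonneg.2 hb.le)⟩
    rw [coe_mul_top_of_pos ha, top_add_of_ne_bot hbB]
    exact le_top
  | bot =>
    obtain ⟨s, hs, -⟩ := exists_between_coe_real (by simpa using hBA : B ≠ ⊤).lt_top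
    rw [eq_bot ha fun r => h r s (bot_lt_coe r) hs]
    exact bot_le
  | coe α =>
    induction B with
    | top =>
      rw [coe_mul_top_of_pos hb, ← coe_mul, add_top_of_ne_bot (coe_ne_bot _)]
      exact le_top
    | bot =>
      rw [eq_bot hb fun s => (h (α + 1) s (by exact_mod_cast lt_add_one α) (bot_lt_coe s)).trans_eq
        (by rw [add_comm])]
      exact bot_le
    | coe β =>
      rw [← coe_mul, ← coe_mul, ← coe_add, ← le_of_forall_lt_iff_le]
      intro z hz
      set ε := (z - (a * α + b * β)) / (a + b)
      have hε : 0 < ε := _root_.div_pos (by exact_mod_cast sub_pos.2 hz) (by linarith)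
      refine (h (α + ε) (β + ε) (by exact_mod_cast lt_add_of_pos_right α hε)
        (by exact_mod_cast lt_add_of_pos_right β hε)).trans_eq ?_
      congr 1
      simp only [ε]
      field_simp
      ring

end EReal

section Definitions

variable {E : Type*}

def ConvexEReal [AddCommMonoid E] [SMul ℝ E] (f : E → EReal) : Prop :=
  ∀ x y : E, ∀ a b : ℝ, 0 ≤ a → 0 ≤ b → a + b = 1 →
    f (a • x + b • y) ≤ (a : EReal) * f x + (b : EReal) * f y

def StrongConvexEReal [SeminormedAddCommGroup E] [SMul ℝ E] (σ : ℝ) (f : E → EReal) : Prop :=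
  ∀ x y : E, ∀ a b : ℝ, 0 ≤ a → 0 ≤ b → a + b = 1 →
    f (a • x + b • y) + ((a * b * (σ / 2) * ‖x - y‖ ^ 2 : ℝ) : EReal)
      ≤ (a : EReal) * f x + (b : EReal) * f y

noncomputable def moreauEnvelope [SeminormedAddCommGroup E] (γ : ℝ) (f : E → EReal) (x : E) :
    EReal :=
  ⨅ y, f y + ((1 / (2 * γ) * ‖x - y‖ ^ 2 : ℝ) : EReal)

end Definitions

open ContinuousLinearMap in
theorem ConvexEReal.exists_affine_le_of_lt {E : Type*} [NormedAddCommGroup E] [NormedSpace ℝ E]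
    {f : E → EReal} (hconv : ConvexEReal f) (hlsc : LowerSemicontinuous f) {z : E} {t : ℝ}
    (ht : t < f z) (hz : f z ≠ ⊤) :
    ∃ (L : StrongDual ℝ E) (c : ℝ), (∀ y, ((L y + c : ℝ) : EReal) ≤ f y) ∧ L z + c = t := by
  set S := {q : E × ℝ | f q.1 ≤ q.2}
  have hSconv : Convex ℝ S := fun q₁ hq₁ q₂ hq₂ a b ha hb hab =>
    (hconv q₁.1 q₂.1 a b ha hb hab).trans (EReal.coe_mul_add_coe_mul_le ha hb hq₁ hq₂)
  have hSclosed : IsClosed S :=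
    hlsc.isClosed_epigraph.preimage (continuous_id.prodMap continuous_coe_real_ereal)
  obtain ⟨ψ, u, hψzt, hψS⟩ :=
    geometric_hahn_banach_point_closed hSconv hSclosed (show (z, t) ∉ S from not_le.2 ht)
  set L₀ := ψ.comp (inl ℝ E ℝ)
  set β := ψ (0, 1)
  have hψ (y : E) (r : ℝ) : ψ (y, r) = L₀ y + r * β := by
    rw [show ((y, r) : E × ℝ) = (y, 0) + r • (0, 1) by simp, map_add, map_smul, smul_eq_mul]
    rfl
  rw [hψ] at hψzt
  have hsep {y : E} {r : ℝ} (h : f y ≤ r) : L₀ z + t * β < L₀ y + r * β :=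
    hψzt.trans (hψ y r ▸ hψS (y, r) h)
  obtain ⟨s, hs, -⟩ := EReal.exists_between_coe_real hz.lt_top
  have hts : t < s := EReal.coe_lt_coe_iff.1 (ht.trans hs)
  have hβ : 0 < β := by nlinarith [hsep hs.le]
  refine ⟨-β⁻¹ • L₀, β⁻¹ * L₀ z + t, fun y => EReal.le_of_forall_lt_iff_le.1 fun r hr => ?_, by simp⟩
  have := hsep hr.le
  rw [EReal.coe_le_coe_iff]
  simp only [FunLike.coe_smul, Pi.smul_apply, smul_eq_mul, neg_mul]
  field_simp
  nlinarith

section Normed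

variable {E : Type*} [SeminormedAddCommGroup E]

theorem div_one_add_mul_mul_norm_add_sq_le {σ γ : ℝ} (hσ : 0 < σ) (hγ : 0 < γ) (e f : E) :
    σ / (1 + γ * σ) * ‖e + f‖ ^ 2 ≤ ‖e‖ ^ 2 / γ + σ * ‖f‖ ^ 2 := by
  have key : σ * (‖e‖ + ‖f‖) ^ 2 + (‖e‖ - γ * σ * ‖f‖) ^ 2 / γ
      = (‖e‖ ^ 2 / γ + σ * ‖f‖ ^ 2) * (1 + γ * σ) := by
    field_simp
    ring
  rw [div_mul_eq_mul_div, div_le_iff₀ (by positivity), ← key]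
  have := div_nonneg (sq_nonneg (‖e‖ - γ * σ * ‖f‖)) hγ.le
  nlinarith [pow_le_pow_left₀ (norm_nonneg _) (norm_add_le e f) 2]

theorem moreauEnvelope_le (γ : ℝ) (f : E → EReal) (x y : E) :
    moreauEnvelope γ f x ≤ f y + ((1 / (2 * γ) * ‖x - y‖ ^ 2 : ℝ) : EReal) :=
  iInf_le (fun y => f y + ((1 / (2 * γ) * ‖x - y‖ ^ 2 : ℝ) : EReal)) y

theorem moreauEnvelope_ne_top {U : E → EReal} {γ : ℝ} (hproper : ∃ x, U x ≠ ⊤) (x : E) :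
    moreauEnvelope γ U x ≠ ⊤ := by
  obtain ⟨y, hy⟩ := hproper
  exact ne_top_of_le_ne_top (EReal.add_ne_top hy (EReal.coe_ne_top _)) (moreauEnvelope_le γ U x y)

theorem strongConvexEReal_of_pos [Module ℝ E] {σ : ℝ} {f : E → EReal}
    (h : ∀ x y : E, ∀ a b : ℝ, 0 < a → 0 < b → a + b = 1 →
      f (a • x + b • y) + ((a * b * (σ / 2) * ‖x - y‖ ^ 2 : ℝ) : EReal)
        ≤ (a : EReal) * f x + (b : EReal) * f y) :
    StrongConvexEReal σ f := by
  intro x y a b ha hb hab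
  rcases ha.eq_or_lt with rfl | ha
  · obtain rfl : b = 1 := by linarith
    simp
  rcases hb.eq_or_lt with rfl | hb
  · obtain rfl : a = 1 := by linarith
    simp
  exact h x y a b ha hb hab

end Normed

section InnerProductSpace

variable {E : Type*} [NormedAddCommGroup E] [InnerProductSpace ℝ E] {U : E → EReal} {σ γ : ℝ}

theorem norm_smul_add_smul_sq_add {a b : ℝ} (hab : a + b = 1) (v w : E) :
    ‖a • v + b • w‖ ^ 2 + a * b * ‖v - w‖ ^ 2 = a * ‖v‖ ^ 2 + b * ‖w‖ ^ 2 := by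
  rw [norm_add_sq_real, norm_sub_sq_real, norm_smul, norm_smul, real_inner_smul_left,
    real_inner_smul_right, mul_pow, mul_pow, Real.norm_eq_abs, Real.norm_eq_abs, sq_abs, sq_abs]
  obtain rfl := eq_sub_of_add_eq hab
  ring

theorem strongConvexEReal_moreauEnvelope (hσ : 0 < σ) (hγ : 0 < γ) (hproper : ∃ x, U x ≠ ⊤)
    (hU : StrongConvexEReal σ U) : StrongConvexEReal (σ / (1 + γ * σ)) (moreauEnvelope γ U) := by
  refine strongConvexEReal_of_pos fun x₁ x₂ a b ha hb hab => ?_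
  refine EReal.le_coe_mul_add_coe_mul_of_forall_lt ha hb
    (.inl (moreauEnvelope_ne_top hproper x₁)) (.inl (moreauEnvelope_ne_top hproper x₂))
    fun r s hr hs => ?_
  obtain ⟨y₁, hy₁⟩ := iInf_lt_iff.1 hr
  obtain ⟨y₂, hy₂⟩ := iInf_lt_iff.1 hs
  have hquad : 1 / (2 * γ) * ‖(a • x₁ + b • x₂) - (a • y₁ + b • y₂)‖ ^ 2
      + a * b * (σ / (1 + γ * σ) / 2) * ‖x₁ - x₂‖ ^ 2
      ≤ a * (1 / (2 * γ) * ‖x₁ - y₁‖ ^ 2) + b * (1 / (2 * γ) * ‖x₂ - y₂‖ ^ 2)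
        + a * b * (σ / 2) * ‖y₁ - y₂‖ ^ 2 := by
    have hsplit := norm_smul_add_smul_sq_add hab (x₁ - y₁) (x₂ - y₂)
    have hmod := div_one_add_mul_mul_norm_add_sq_le hσ hγ ((x₁ - y₁) - (x₂ - y₂)) (y₁ - y₂)
    rw [show a • (x₁ - y₁) + b • (x₂ - y₂) = (a • x₁ + b • x₂) - (a • y₁ + b • y₂) by
      simp only [smul_sub]; abel] at hsplit
    rw [show x₁ - y₁ - (x₂ - y₂) + (y₁ - y₂) = x₁ - x₂ by abel] at hmod
    linear_combination (a * b / 2) * hmod + (1 / (2 * γ)) * hsplit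
  have hw := EReal.add_coe_le_coe_iff.1 ((hU y₁ y₂ a b ha.le hb.le hab).trans
    (EReal.coe_mul_add_coe_mul_le ha.le hb.le (EReal.add_coe_le_coe_iff.1 hy₁.le)
      (EReal.add_coe_le_coe_iff.1 hy₂.le)))
  calc _ ≤ U (a • y₁ + b • y₂)
          + ((1 / (2 * γ) * ‖(a • x₁ + b • x₂) - (a • y₁ + b • y₂)‖ ^ 2 : ℝ) : EReal)
          + ((a * b * (σ / (1 + γ * σ) / 2) * ‖x₁ - x₂‖ ^ 2 : ℝ) : EReal) := by
        gcongr
        exact moreauEnvelope_le γ U _ _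
    _ ≤ _ := by
        rw [add_assoc, ← EReal.coe_add]
        grw [hw]
        rw [← EReal.coe_add, EReal.coe_le_coe_iff]
        linarith

theorem moreauEnvelope_le_of_strongConvexEReal (hσ : 0 < σ) (hγ : 0 < γ)
    (hM : StrongConvexEReal (σ / (1 + γ * σ)) (moreauEnvelope γ U)) {y₁ y₂ : E} {a b r s : ℝ}
    (ha : 0 ≤ a) (hb : 0 ≤ b) (hab : a + b = 1) (h₁ : U y₁ ≤ r) (h₂ : U y₂ ≤ s) (x : E) :
    moreauEnvelope γ U x ≤ ((a * r + b * s - a * b * (σ / 2) * ‖y₁ - y₂‖ ^ 2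
      + 1 / (2 * γ) * ‖x - (a • y₁ + b • y₂)‖ ^ 2 : ℝ) : EReal) := by
  set τ := 1 + γ * σ
  set d := y₁ - y₂
  set x₁ := x + (b * τ) • d
  set x₂ := x - (a * τ) • d
  have hb' : b = 1 - a := by linarith
  have hx : a • x₁ + b • x₂ = x := by
    simp only [x₁, x₂, hb']; match_scalars <;> ring
  have hx₁₂ : x₁ - x₂ = τ • d := by
    simp only [x₁, x₂, hb']; match_scalars <;> ring
  have hdiff : (x₁ - y₁) - (x₂ - y₂) = (γ * σ) • d := by
    simp only [x₁, x₂, d, τ, hb']; match_scalars <;> ring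
  have hcomb : a • (x₁ - y₁) + b • (x₂ - y₂) = x - (a • y₁ + b • y₂) := by
    rw [← hx]; simp only [smul_sub]; abel
  have hM' := hM x₁ x₂ a b ha hb hab
  rw [hx, hx₁₂] at hM'
  have henv {x' y : E} {r' : ℝ} (h : U y ≤ r') :
      moreauEnvelope γ U x' ≤ ((r' + 1 / (2 * γ) * ‖x' - y‖ ^ 2 : ℝ) : EReal) :=
    (moreauEnvelope_le γ U x' y).trans (by rw [EReal.coe_add]; gcongr)
  refine (EReal.add_coe_le_coe_iff.1 (hM'.trans
    (EReal.coe_mul_add_coe_mul_le ha hb (henv h₁) (henv h₂)))).trans_eq (congrArg _ ?_)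
  have hsplit := norm_smul_add_smul_sq_add hab (x₁ - y₁) (x₂ - y₂)
  rw [hcomb, hdiff, norm_smul, mul_pow, Real.norm_eq_abs, sq_abs] at hsplit
  rw [norm_smul, mul_pow, Real.norm_eq_abs, sq_abs]
  have hτ : τ ≠ 0 := by positivity
  linear_combination (norm := skip) (-1 / (2 * γ)) * hsplit
  field_simp
  simp only [τ]
  ring

theorem exists_add_le_moreauEnvelope [CompleteSpace E] (hconv : ConvexEReal U)
    (hlsc : LowerSemicontinuous U) (hγ : 0 < γ) {z : E} {t : ℝ} (ht : t < U z) (hz : U z ≠ ⊤) :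
    ∃ x, ((t + 1 / (2 * γ) * ‖x - z‖ ^ 2 : ℝ) : EReal) ≤ moreauEnvelope γ U x := by
  obtain ⟨L, c, hL, hLz⟩ := hconv.exists_affine_le_of_lt hlsc ht hz
  set p := (InnerProductSpace.toDual ℝ E).symm L
  have hp (y : E) : L y = inner ℝ p y := InnerProductSpace.toDual_symm_apply.symm
  refine ⟨z + γ • p, le_iInf fun y => le_trans ?_ (add_le_add_left (hL y) _)⟩
  rw [← EReal.coe_add, EReal.coe_le_coe_iff, ← hLz, hp, hp, add_sub_cancel_left,
    show z + γ • p - y = (z - y) + γ • p by abel, norm_add_sq_real, inner_smul_right,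
    inner_sub_left, norm_smul, mul_pow, Real.norm_eq_abs, sq_abs, real_inner_comm p y]
  field_simp
  nlinarith [real_inner_comm p z, sq_nonneg ‖z - y‖]

theorem strongConvexEReal_of_moreauEnvelope [CompleteSpace E] (hnebot : ∀ x, U x ≠ ⊥)
    (hlsc : LowerSemicontinuous U) (hconv : ConvexEReal U) (hσ : 0 < σ) (hγ : 0 < γ)
    (hM : StrongConvexEReal (σ / (1 + γ * σ)) (moreauEnvelope γ U)) : StrongConvexEReal σ U := by
  refine strongConvexEReal_of_pos fun y₁ y₂ a b ha hb hab => ?_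
  refine EReal.le_coe_mul_add_coe_mul_of_forall_lt ha hb (.inr (hnebot y₂)) (.inr (hnebot y₁))
    fun r s hr hs => ?_
  rw [EReal.add_coe_le_coe_iff]
  by_contra! hlt
  obtain ⟨t, hKt, htU⟩ := EReal.exists_between_coe_real hlt
  have hfin : U (a • y₁ + b • y₂) ≠ ⊤ := ne_top_of_le_ne_top (EReal.coe_ne_top (a * r + b * s))
    ((hconv y₁ y₂ a b ha.le hb.le hab).trans (EReal.coe_mul_add_coe_mul_le ha.le hb.le hr.le hs.le))
  obtain ⟨x, hx⟩ := exists_add_le_moreauEnvelope hconv hlsc hγ htU hfin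
  have := EReal.coe_le_coe_iff.1 <| hx.trans <|
    moreauEnvelope_le_of_strongConvexEReal hσ hγ hM ha.le hb.le hab hr.le hs.le x
  have := EReal.coe_lt_coe_iff.1 hKt
  linarith

end InnerProductSpace

theorem stmt_6 {n : ℕ} (U : EuclideanSpace ℝ (Fin n) → EReal)
    (hproper : ∃ x, U x ≠ ⊤) (hnebot : ∀ x, U x ≠ ⊥)
    (hlsc : LowerSemicontinuous U)
    (hconv : ∀ x y : EuclideanSpace ℝ (Fin n), ∀ a b : ℝ, 0 ≤ a → 0 ≤ b → a + b = 1 →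
      U (a • x + b • y) ≤ (a : EReal) * U x + (b : EReal) * U y)
    (σ γ : ℝ) (hσ : 0 < σ) (hγ : 0 < γ)
    (Uγ : EuclideanSpace ℝ (Fin n) → EReal)
    (hUγ : ∀ x, Uγ x = ⨅ y, U y + (((1/(2*γ)) * ‖x - y‖^2 : ℝ) : EReal)) :
    (∀ x y : EuclideanSpace ℝ (Fin n), ∀ a b : ℝ, 0 ≤ a → 0 ≤ b → a + b = 1 →
        U (a • x + b • y) + ((a * b * (σ/2) * ‖x - y‖^2 : ℝ) : EReal)
          ≤ (a : EReal) * U x + (b : EReal) * U y)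
    ↔ (∀ x y : EuclideanSpace ℝ (Fin n), ∀ a b : ℝ, 0 ≤ a → 0 ≤ b → a + b = 1 →
        Uγ (a • x + b • y) + ((a * b * ((σ/(1+γ*σ))/2) * ‖x - y‖^2 : ℝ) : EReal)
          ≤ (a : EReal) * Uγ x + (b : EReal) * Uγ y) := by
  obtain rfl : Uγ = moreauEnvelope γ U := funext hUγ
  exact ⟨strongConvexEReal_moreauEnvelope hσ hγ hproper,
    strongConvexEReal_of_moreauEnvelope hnebot hlsc hconv hσ hγ⟩
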